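/- arXiv:0905.0385 — 8 statements merged into one kernel-verified Lean document; each statement's English description precedes it below -/
import Mathlib

section
/- Let H and G have near-zero exponents κ_H > 0 and κ_G > 0. Let d > 0, δ > 0, ε > 0, and let h′ ≥ 0, g′ ≥ 0 satisfy κ_H·h′ + κ_G·g′ ≤ d − δ. Then liminf_{s→∞} [log P( h′ ≤ Ĥ_s < h′+ε and g′ ≤ Ĝ_s < g′+ε )] / log s ≥ −(d − δ). (In the paper's notation: the probability of an infinitesimal square E^ε contained in the no-outage set Ô^c is asymptotically at least SNR^{−d+δ}.) -/
open MeasureTheory Filter Set Topology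

/-!
On the event `{s^{-β} ≤ H < s^{-α}}` the order variable `Ĥ_s` lies in `(α, β]`. Since
`P(H < s^{-a}) = s^{-κ_H a + o(1)}`, for `α < β` the term `P(H < s^{-β})` is eventually at most half
of `P(H < s^{-α})`, so the event has probability at least `s^{-κ_H α + o(1)} / 2`. Independence
multiplies this with the analogous bound for `G`, which gives the exponent `-(κ_H α + κ_G α')`;
letting `α ↓ h'`, `α' ↓ g'` yields `-(κ_H h' + κ_G g') ≥ -(d - δ)`.
-/

noncomputable def orderVar {Ω : Type*} (X : Ω → ℝ) (s : ℝ) (ω : Ω) : ℝ :=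
  -Real.log (X ω) / Real.log s

lemma orderVar_mem_Ioc_of_mem_Ico {Ω : Type*} {X : Ω → ℝ} {ω : Ω} {s a b : ℝ} (hs : 1 < s)
    (hX : X ω ∈ Ico (s ^ (-b)) (s ^ (-a))) : orderVar X s ω ∈ Ioc a b := by
  have hs0 : 0 < s := by linarith
  have hlogs : 0 < Real.log s := Real.log_pos hs
  have hXpos : 0 < X ω := (Real.rpow_pos_of_pos hs0 _).trans_le hX.1
  have hlow : -b * Real.log s ≤ Real.log (X ω) := by
    rw [← Real.log_rpow hs0]; exact Real.log_le_log (Real.rpow_pos_of_pos hs0 _) hX.1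
  have hup : Real.log (X ω) < -a * Real.log s := by
    rw [← Real.log_rpow hs0]; exact Real.log_lt_log hXpos hX.2
  unfold orderVar
  constructor
  · rw [lt_div_iff₀ hlogs]; linarith
  · rw [div_le_iff₀ hlogs]; linarith

lemma tendsto_log_comp_rpow_neg_div_log {p : ℝ → ℝ} {κ a : ℝ}
    (hp : Tendsto (fun t => Real.log (p t) / Real.log t) (𝓝[>] 0) (𝓝 κ)) (ha : 0 < a) :
    Tendsto (fun s => Real.log (p (s ^ (-a))) / Real.log s) atTop (𝓝 (-(κ * a))) := by
  have hrpow : Tendsto (fun s : ℝ => s ^ (-a)) atTop (𝓝[>] 0) := by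
    refine tendsto_nhdsWithin_iff.2 ⟨tendsto_rpow_neg_atTop ha, ?_⟩
    filter_upwards [eventually_gt_atTop 0] with s hs
    exact Real.rpow_pos_of_pos hs _
  have h := (hp.comp hrpow).mul_const (-a)
  rw [mul_neg] at h
  refine h.congr' ?_
  filter_upwards [eventually_gt_atTop 1] with s hs
  have hlogs : Real.log s ≠ 0 := (Real.log_pos hs).ne'
  simp only [Function.comp_apply, Real.log_rpow (zero_lt_one.trans hs)]
  field_simp

lemma eventually_ne_zero_of_tendsto_log_div {α : Type*} {l : Filter α} {u g : α → ℝ} {A : ℝ}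
    (hu : Tendsto (fun x => Real.log (u x) / g x) l (𝓝 A)) (hA : A ≠ 0) :
    ∀ᶠ x in l, u x ≠ 0 := by
  -- `Real.log 0 = 0`, so the quotient vanishes wherever `u` does.
  filter_upwards [hu.eventually_ne hA] with x hx hux
  simp [hux] at hx

lemma eventually_two_mul_le_of_log_div_log_lt {u v : ℝ → ℝ} {A B : ℝ}
    (hu : Tendsto (fun s => Real.log (u s) / Real.log s) atTop (𝓝 A))
    (hv : Tendsto (fun s => Real.log (v s) / Real.log s) atTop (𝓝 B)) (hBA : B < A)
    (hu0 : ∀ᶠ s in atTop, 0 < u s) :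
    ∀ᶠ s in atTop, 2 * v s ≤ u s := by
  set c := (A - B) / 2
  have hc : 0 < c := by simp only [c]; linarith
  have hgap : ∀ᶠ s in atTop, Real.log (v s) / Real.log s - Real.log (u s) / Real.log s < -c :=
    (hv.sub hu).eventually_lt_const (by simp only [c]; linarith)
  filter_upwards [hgap, hu0, eventually_gt_atTop 1,
    Real.tendsto_log_atTop.eventually_gt_atTop (Real.log 2 / c)] with s hgap hu0 hs hlarge
  rcases le_or_gt (v s) 0 with hv0 | hv0
  · linarith
  have hlogs : 0 < Real.log s := Real.log_pos hs
  have hlog2 : Real.log 2 < c * Real.log s := by rwa [div_lt_iff₀' hc] at hlarge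
  have hlogv : Real.log (v s) < Real.log (u s / 2) := by
    rw [← sub_div, div_lt_iff₀ hlogs] at hgap
    rw [Real.log_div hu0.ne' two_ne_zero]
    linarith
  linarith [(Real.log_lt_log_iff hv0 (by positivity)).1 hlogv]

lemma eventually_measureReal_lt_le_two_mul_measureReal_Ico {Ω : Type*} [MeasurableSpace Ω]
    {μ : Measure Ω} [IsFiniteMeasure μ] {X : Ω → ℝ} {κ a b : ℝ} (hκ : 0 < κ)
    (hX : Tendsto (fun t => Real.log (μ.real {ω | X ω < t}) / Real.log t) (𝓝[>] 0) (𝓝 κ))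
    (ha : 0 < a) (hab : a < b) :
    ∀ᶠ s in atTop, 0 < μ.real {ω | X ω < s ^ (-a)} ∧
      μ.real {ω | X ω < s ^ (-a)} ≤ 2 * μ.real (X ⁻¹' Ico (s ^ (-b)) (s ^ (-a))) := by
  have hXa := tendsto_log_comp_rpow_neg_div_log hX ha
  have hXb := tendsto_log_comp_rpow_neg_div_log hX (ha.trans hab)
  have hpos : ∀ᶠ s in atTop, 0 < μ.real {ω | X ω < s ^ (-a)} := by
    have hA : -(κ * a) ≠ 0 := neg_ne_zero.2 (mul_pos hκ ha).ne'
    filter_upwards [eventually_ne_zero_of_tendsto_log_div hXa hA] with s hs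
    exact measureReal_nonneg.lt_of_ne' hs
  have hsmall := eventually_two_mul_le_of_log_div_log_lt hXa hXb (by nlinarith) hpos
  filter_upwards [hpos, hsmall] with s hpos hsmall
  refine ⟨hpos, ?_⟩
  have hcover :
      {ω | X ω < s ^ (-a)} ⊆ X ⁻¹' Ico (s ^ (-b)) (s ^ (-a)) ∪ {ω | X ω < s ^ (-b)} := by
    intro ω hω
    rcases lt_or_ge (X ω) (s ^ (-b)) with h | h
    · exact Or.inr h
    · exact Or.inl ⟨h, hω⟩
  linarith [(measureReal_mono (μ := μ) hcover).trans (measureReal_union_le _ _)]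

lemma ProbabilityTheory.IndepFun.measureReal_inter_preimage_eq_mul {Ω β β' : Type*}
    {_ : MeasurableSpace Ω} {μ : Measure Ω} {f : Ω → β} {g : Ω → β'} {_ : MeasurableSpace β}
    {_ : MeasurableSpace β'} (hfg : ProbabilityTheory.IndepFun f g μ) {s : Set β} {t : Set β'}
    (hs : MeasurableSet s) (ht : MeasurableSet t) :
    μ.real (f ⁻¹' s ∩ g ⁻¹' t) = μ.real (f ⁻¹' s) * μ.real (g ⁻¹' t) := by
  simp only [measureReal_def, hfg.measure_inter_preimage_eq_mul _ _ hs ht, ENNReal.toReal_mul]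

lemma neg_le_liminf_log_measureReal_orderVar {Ω : Type*} [MeasurableSpace Ω] {μ : Measure Ω}
    [IsProbabilityMeasure μ] {H G : Ω → ℝ} (hindep : ProbabilityTheory.IndepFun H G μ)
    {κH κG : ℝ} (hκH : 0 < κH) (hκG : 0 < κG)
    (hH : Tendsto (fun t => Real.log (μ.real {ω | H ω < t}) / Real.log t) (𝓝[>] 0) (𝓝 κH))
    (hG : Tendsto (fun t => Real.log (μ.real {ω | G ω < t}) / Real.log t) (𝓝[>] 0) (𝓝 κG))
    {α β α' β' : ℝ} (hα : 0 < α) (hαβ : α < β) (hα' : 0 < α') (hαβ' : α' < β')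
    {I J : Set ℝ} (hI : Ioc α β ⊆ I) (hJ : Ioc α' β' ⊆ J) :
    -(κH * α + κG * α') ≤ liminf (fun s =>
      Real.log (μ.real (orderVar H s ⁻¹' I ∩ orderVar G s ⁻¹' J)) / Real.log s) atTop := by
  set f := fun s =>
    Real.log (μ.real (orderVar H s ⁻¹' I ∩ orderVar G s ⁻¹' J)) / Real.log s
  set w := fun s => Real.log (μ.real {ω | H ω < s ^ (-α)}) / Real.log s
    + Real.log (μ.real {ω | G ω < s ^ (-α')}) / Real.log s - Real.log 4 / Real.log s
  have hw : Tendsto w atTop (𝓝 (-(κH * α) + -(κG * α') - 0)) :=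
    ((tendsto_log_comp_rpow_neg_div_log hH hα).add
      (tendsto_log_comp_rpow_neg_div_log hG hα')).sub
      (tendsto_const_nhds.div_atTop Real.tendsto_log_atTop)
  have hwf : ∀ᶠ s in atTop, w s ≤ f s := by
    filter_upwards [eventually_measureReal_lt_le_two_mul_measureReal_Ico hκH hH hα hαβ,
      eventually_measureReal_lt_le_two_mul_measureReal_Ico hκG hG hα' hαβ',
      eventually_gt_atTop 1] with s ⟨hpH, hpH2⟩ ⟨hpG, hpG2⟩ hs
    set pH := μ.real {ω | H ω < s ^ (-α)}
    set pG := μ.real {ω | G ω < s ^ (-α')}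
    set EH := H ⁻¹' Ico (s ^ (-β)) (s ^ (-α))
    set EG := G ⁻¹' Ico (s ^ (-β')) (s ^ (-α'))
    have hsub : EH ∩ EG ⊆ orderVar H s ⁻¹' I ∩ orderVar G s ⁻¹' J := fun ω hω =>
      ⟨hI (orderVar_mem_Ioc_of_mem_Ico hs hω.1), hJ (orderVar_mem_Ioc_of_mem_Ico hs hω.2)⟩
    have hlower : pH * pG / 4 ≤ μ.real (orderVar H s ⁻¹' I ∩ orderVar G s ⁻¹' J) :=
      calc pH * pG / 4 ≤ μ.real EH * μ.real EG := by
            nlinarith [measureReal_nonneg (μ := μ) (s := EH)]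
        _ = μ.real (EH ∩ EG) :=
            (hindep.measureReal_inter_preimage_eq_mul measurableSet_Ico measurableSet_Ico).symm
        _ ≤ _ := measureReal_mono hsub
    have hlog := Real.log_le_log (by positivity) hlower
    rw [Real.log_div (by positivity) four_ne_zero, Real.log_mul hpH.ne' hpG.ne'] at hlog
    simp only [w, f, ← add_div, ← sub_div]
    exact div_le_div_of_nonneg_right hlog (Real.log_pos hs).le
  have hf : IsCoboundedUnder (· ≥ ·) atTop f := by
    refine isCoboundedUnder_ge_of_eventually_le atTop (x := 0) ?_
    filter_upwards [eventually_gt_atTop 1] with s hs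
    exact div_nonpos_of_nonpos_of_nonneg
      (Real.log_nonpos measureReal_nonneg measureReal_le_one) (Real.log_pos hs).le
  have := liminf_le_liminf hwf hw.isBoundedUnder_ge hf
  rw [hw.liminf_eq] at this
  linarith

theorem stmt_0_general
    {Ω : Type*} [MeasurableSpace Ω] (μ : Measure Ω) [IsProbabilityMeasure μ]
    (H G : Ω → ℝ)
    (hindep : ProbabilityTheory.IndepFun H G μ)
    (κH κG : ℝ) (hκH : 0 < κH) (hκG : 0 < κG)
    (hH : Tendsto (fun t : ℝ => Real.log (μ {ω | H ω < t}).toReal / Real.log t)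
      (nhdsWithin 0 (Ioi 0)) (nhds κH))
    (hG : Tendsto (fun t : ℝ => Real.log (μ {ω | G ω < t}).toReal / Real.log t)
      (nhdsWithin 0 (Ioi 0)) (nhds κG))
    (d δ ε h' g' : ℝ) (hε : 0 < ε)
    (hh' : 0 ≤ h') (hg' : 0 ≤ g')
    (hcon : κH * h' + κG * g' ≤ d - δ) :
    -(d - δ) ≤
      liminf (fun s : ℝ =>
        Real.log (μ {ω |
          (h' ≤ -Real.log (H ω) / Real.log s ∧ -Real.log (H ω) / Real.log s < h' + ε) ∧
          (g' ≤ -Real.log (G ω) / Real.log s ∧ -Real.log (G ω) / Real.log s < g' + ε)}).toReal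
        / Real.log s) atTop := by
  have hlim : Tendsto (fun θ => -(κH * (h' + θ) + κG * (g' + θ))) (𝓝[>] 0)
      (𝓝 (-(κH * h' + κG * g'))) := by
    have hcont : Continuous fun θ => -(κH * (h' + θ) + κG * (g' + θ)) := by fun_prop
    simpa using hcont.tendsto 0 |>.mono_left nhdsWithin_le_nhds
  change -(d - δ) ≤ liminf (fun s => Real.log (μ.real
    (orderVar H s ⁻¹' Ico h' (h' + ε) ∩ orderVar G s ⁻¹' Ico g' (g' + ε))) / Real.log s) atTop
  refine (neg_le_neg hcon).trans (le_of_tendsto hlim ?_)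
  filter_upwards [Ioo_mem_nhdsGT (half_pos hε)] with θ ⟨hθ, hθε⟩
  exact neg_le_liminf_log_measureReal_orderVar hindep hκH hκG hH hG
    (α := h' + θ) (β := h' + 2 * θ) (α' := g' + θ) (β' := g' + 2 * θ)
    (by linarith) (by linarith) (by linarith) (by linarith)
    (fun x hx => ⟨by linarith [hx.1], by linarith [hx.2]⟩)
    (fun x hx => ⟨by linarith [hx.1], by linarith [hx.2]⟩)

/-- If `H` and `G` are independent nonnegative random variables with
near-zero exponents `κH, κG > 0`, and `h', g' ≥ 0` satisfy `κH⬝h' + κG⬝g' ≤ d - δ`,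
then the probability of the infinitesimal square
`{h' ≤ Ĥ_s < h'+ε, g' ≤ Ĝ_s < g'+ε}` (where `Ĥ_s = -log H / log s`)
is asymptotically at least `s^{-(d-δ)}` on the logarithmic scale. -/
theorem stmt_0
    {Ω : Type*} [MeasurableSpace Ω] (μ : Measure Ω) [IsProbabilityMeasure μ]
    (H G : Ω → ℝ)
    (hHmeas : Measurable H) (hGmeas : Measurable G)
    (hHnonneg : ∀ ω, 0 ≤ H ω) (hGnonneg : ∀ ω, 0 ≤ G ω)
    (hindep : ProbabilityTheory.IndepFun H G μ)
    (κH κG : ℝ) (hκH : 0 < κH) (hκG : 0 < κG)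
    (hH : Tendsto (fun t : ℝ => Real.log (μ {ω | H ω < t}).toReal / Real.log t)
      (nhdsWithin 0 (Ioi 0)) (nhds κH))
    (hG : Tendsto (fun t : ℝ => Real.log (μ {ω | G ω < t}).toReal / Real.log t)
      (nhdsWithin 0 (Ioi 0)) (nhds κG))
    (d δ ε h' g' : ℝ) (hd : 0 < d) (hδ : 0 < δ) (hε : 0 < ε)
    (hh' : 0 ≤ h') (hg' : 0 ≤ g')
    (hcon : κH * h' + κG * g' ≤ d - δ) :
    -(d - δ) ≤
      liminf (fun s : ℝ =>
        Real.log (μ {ω |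
          (h' ≤ -Real.log (H ω) / Real.log s ∧ -Real.log (H ω) / Real.log s < h' + ε) ∧
          (g' ≤ -Real.log (G ω) / Real.log s ∧ -Real.log (G ω) / Real.log s < g' + ε)}).toReal
        / Real.log s) atTop :=
  stmt_0_general μ H G hindep κH κG hκH hκG hH hG d δ ε h' g' hε hh' hg' hcon
end

section
/- Let H and G be independent with near-zero exponents κ_H > 0 and κ_G > 0, and suppose each has an exponential tail. Then for every d > 0, lim_{s→∞} [log P( Ĥ_s ≥ 0, Ĝ_s ≥ 0, and κ_H·Ĥ_s + κ_G·Ĝ_s ≥ d )] / log s = −d. Equivalently, the probability of the outage event {H ≤ 1, G ≤ 1, H^{κ_H}·G^{κ_G} ≤ s^{−d}} decays exactly like s^{−d} on the logarithmic scale: P(outage) ≐ SNR^{−d}. -/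
/-!
Write `X = κH Ĥ_s` and `Y = κG Ĝ_s`, so that the outage event is `{X ≥ 0, Y ≥ 0, X + Y ≥ d}`.
Since `log 0 = 0`, the points where `H = 0` get `Ĥ_s = 0`; they form a null set because
`P(H < t) → 0` as `t → 0`.

Lower bound: the event contains `{0 < H < s^{-d/κH}} ∩ {0 < G < t₁}` for a fixed `t₁ < 1`;
by independence and the near-zero exponent of `H` its probability is at least `c s^{-α}` for
every `α > d`.

Upper bound: a grid of step `δ = d / (n + 1)` covers the event by the `n + 1` rectangles
`{X ≥ iδ, Y ≥ jδ}`, `i + j = n`. The near-zero exponents give `P(H ≤ t) ≤ C t^{ρ κH}` for all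
`t > 0` and any `ρ < 1`, so by independence each rectangle has probability `O(s^{-ρ n δ})`, and
`ρ n δ` comes arbitrarily close to `d`.
-/

open MeasureTheory Filter Set
open Real Topology
open Finset.HasAntidiagonal

lemma le_neg_log_div_log_iff {x s a : ℝ} (hx : 0 < x) (hs : 1 < s) :
    a ≤ -log x / log s ↔ x ≤ s ^ (-a) := by
  rw [le_div_iff₀ (log_pos hs), le_rpow_iff_log_le hx (by positivity)]
  constructor <;> intro h <;> linarith

lemma le_rpow_neg_of_le_neg_log_div_log {x s a : ℝ} (hx : 0 ≤ x) (hs : 1 < s)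
    (h : a ≤ -log x / log s) : x ≤ s ^ (-a) := by
  rcases hx.eq_or_lt with rfl | hx
  · positivity
  · exact (le_neg_log_div_log_iff hx hs).1 h

lemma tendsto_log_mul_rpow_div_log {c : ℝ} (hc : 0 < c) (α : ℝ) :
    Tendsto (fun s => log (c * s ^ (-α)) / log s) atTop (𝓝 (-α)) := by
  have h : Tendsto (fun s => log c / log s + -α) atTop (𝓝 (0 + -α)) :=
    (tendsto_const_nhds.div_atTop tendsto_log_atTop).add tendsto_const_nhds
  rw [zero_add] at h
  refine h.congr' ?_
  filter_upwards [eventually_gt_atTop 1] with s hs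
  rw [log_mul hc.ne' (by positivity), log_rpow (by positivity)]
  field_simp [(log_pos hs).ne']

lemma tendsto_log_div_log_of_rpow_bounds {p : ℝ → ℝ} {a : ℝ}
    (hlow : ∀ α, a < α → ∃ c > 0, ∀ᶠ s in atTop, c * s ^ (-α) ≤ p s)
    (hup : ∀ β, β < a → ∃ C > 0, ∀ᶠ s in atTop, p s ≤ C * s ^ (-β)) :
    Tendsto (fun s => log (p s) / log s) atTop (𝓝 (-a)) := by
  refine tendsto_order.2 ⟨fun b hb => ?_, fun b hb => ?_⟩
  · obtain ⟨α, haα, hαb⟩ := exists_between (lt_neg.1 hb)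
    obtain ⟨c, hc, h⟩ := hlow α haα
    filter_upwards [(tendsto_log_mul_rpow_div_log hc α).eventually
      (lt_mem_nhds (lt_neg.1 hαb)), h, eventually_gt_atTop 1] with s hb hp hs
    exact hb.trans_le (div_le_div_of_nonneg_right (log_le_log (by positivity) hp)
      (log_pos hs).le)
  · obtain ⟨β, hbβ, hβa⟩ := exists_between (neg_lt.1 hb)
    obtain ⟨C, hC, h⟩ := hup β hβa
    obtain ⟨c, hc, hpos⟩ := hlow (a + 1) (lt_add_one a)
    filter_upwards [(tendsto_log_mul_rpow_div_log hC β).eventually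
      (gt_mem_nhds (neg_lt.1 hbβ)), h, hpos, eventually_gt_atTop 1] with s hb hp hpos hs
    have hp0 : 0 < p s := lt_of_lt_of_le (by positivity) hpos
    exact (div_le_div_of_nonneg_right (log_le_log hp0 hp) (log_pos hs).le).trans_lt hb

section NearZeroExponent

variable {F : ℝ → ℝ} {κ : ℝ}

lemma eventually_le_rpow_of_tendsto_log_div_log
    (hF : Tendsto (fun t => log (F t) / log t) (𝓝[>] 0) (𝓝 κ)) (hF0 : ∀ t, 0 ≤ F t)
    {κ' : ℝ} (hκ' : κ' < κ) : ∀ᶠ t in 𝓝[>] 0, F t ≤ t ^ κ' := by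
  filter_upwards [hF.eventually (lt_mem_nhds hκ'), Ioo_mem_nhdsGT one_pos] with t h ht
  rcases (hF0 t).eq_or_lt with h0 | h0
  · rw [← h0]; exact rpow_nonneg ht.1.le _
  · rw [le_rpow_iff_log_le h0 ht.1]
    exact ((lt_div_iff_of_neg (log_neg ht.1 ht.2)).1 h).le

lemma eventually_rpow_le_of_tendsto_log_div_log
    (hF : Tendsto (fun t => log (F t) / log t) (𝓝[>] 0) (𝓝 κ)) (hF0 : ∀ t, 0 ≤ F t)
    (hκ : 0 < κ) {κ' : ℝ} (hκ' : κ < κ') : ∀ᶠ t in 𝓝[>] 0, t ^ κ' ≤ F t := by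
  filter_upwards [hF.eventually (lt_mem_nhds hκ), hF.eventually (gt_mem_nhds hκ'),
    Ioo_mem_nhdsGT one_pos] with t hpos h ht
  -- `log 0 = 0`, so a positive ratio forces `F t ≠ 0`
  have hFt : 0 < F t := by
    refine (hF0 t).lt_of_ne fun h0 => ?_
    simp [← h0] at hpos
  rw [rpow_le_iff_le_log ht.1 hFt]
  exact ((div_lt_iff_of_neg (log_neg ht.1 ht.2)).1 h).le

end NearZeroExponent

lemma exists_mem_antidiagonal_mul_le {x y δ : ℝ} {n : ℕ} (hx : 0 ≤ x) (hy : 0 ≤ y) (hδ : 0 < δ)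
    (h : (n + 1) * δ ≤ x + y) : ∃ p ∈ antidiagonal n, p.1 * δ ≤ x ∧ p.2 * δ ≤ y := by
  have hk : (⌊x / δ⌋₊ : ℝ) * δ ≤ x := (le_div_iff₀ hδ).1 (Nat.floor_le (div_nonneg hx hδ.le))
  by_cases hn : n ≤ ⌊x / δ⌋₊
  · refine ⟨(n, 0), by simp, ?_, by simpa using hy⟩
    exact le_trans (by gcongr) hk
  · rw [not_le] at hn
    refine ⟨(⌊x / δ⌋₊, n - ⌊x / δ⌋₊), by simp [hn.le], hk, ?_⟩
    have hx' : x < (⌊x / δ⌋₊ + 1) * δ := (div_lt_iff₀ hδ).1 (Nat.lt_floor_add_one _)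
    rw [Nat.cast_sub hn.le]
    linarith

section

variable {Ω : Type*}

def outageSet (H G : Ω → ℝ) (κH κG d s : ℝ) : Set Ω :=
  {ω | 0 ≤ -log (H ω) / log s ∧ 0 ≤ -log (G ω) / log s ∧
    d ≤ κH * (-log (H ω) / log s) + κG * (-log (G ω) / log s)}

lemma outageSet_subset_biUnion_antidiagonal {H G : Ω → ℝ} {κH κG d : ℝ}
    (hHnonneg : ∀ ω, 0 ≤ H ω) (hGnonneg : ∀ ω, 0 ≤ G ω) (hκH : 0 < κH) (hκG : 0 < κG)
    {n : ℕ} {δ : ℝ} (hδ : 0 < δ) (hnδ : (n + 1) * δ ≤ d) {s : ℝ} (hs : 1 < s) :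
    outageSet H G κH κG d s ⊆ ⋃ p ∈ antidiagonal n,
      H ⁻¹' Iic (s ^ (-(p.1 * δ / κH))) ∩ G ⁻¹' Iic (s ^ (-(p.2 * δ / κG))) := by
  rintro ω ⟨hH0, hG0, hsum⟩
  obtain ⟨p, hp, hpH, hpG⟩ := exists_mem_antidiagonal_mul_le (mul_nonneg hκH.le hH0)
    (mul_nonneg hκG.le hG0) hδ (hnδ.trans hsum)
  refine mem_iUnion₂.2 ⟨p, hp, ?_, ?_⟩
  · exact le_rpow_neg_of_le_neg_log_div_log (hHnonneg ω) hs ((div_le_iff₀' hκH).2 hpH)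
  · exact le_rpow_neg_of_le_neg_log_div_log (hGnonneg ω) hs ((div_le_iff₀' hκG).2 hpG)

variable [MeasurableSpace Ω] {μ : Measure Ω}

def HasNearZeroExponent (μ : Measure Ω) (X : Ω → ℝ) (κ : ℝ) : Prop :=
  Tendsto (fun t => log (μ.real {ω | X ω < t}) / log t) (𝓝[>] 0) (𝓝 κ)

namespace HasNearZeroExponent

variable {X : Ω → ℝ} {κ : ℝ}

lemma ae_ne_zero [IsFiniteMeasure μ] (hX : HasNearZeroExponent μ X κ) (hκ : 0 < κ) :
    ∀ᵐ ω ∂μ, X ω ≠ 0 := by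
  have hle : ∀ᶠ t in 𝓝[>] 0, μ.real {ω | X ω = 0} ≤ t ^ (κ / 2) := by
    filter_upwards [eventually_le_rpow_of_tendsto_log_div_log hX (fun _ => measureReal_nonneg)
      (half_lt_self hκ), self_mem_nhdsWithin] with t ht (ht0 : 0 < t)
    refine le_trans (measureReal_mono fun ω (hω : X ω = 0) => ?_) ht
    show X ω < t
    rwa [hω]
  have hlim : Tendsto (fun t : ℝ => t ^ (κ / 2)) (𝓝[>] 0) (𝓝 0) := by
    simpa [zero_rpow (half_pos hκ).ne'] using
      (continuousAt_rpow_const 0 _ (Or.inr (half_pos hκ).le)).tendsto.mono_left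
        nhdsWithin_le_nhds
  have h0 : μ.real {ω | X ω = 0} = 0 := (ge_of_tendsto hlim hle).antisymm measureReal_nonneg
  rw [ae_iff]
  simpa [measureReal_eq_zero_iff] using h0

lemma exists_measureReal_le_le_mul_rpow [IsProbabilityMeasure μ]
    (hX : HasNearZeroExponent μ X κ) {κ' : ℝ} (h0 : 0 ≤ κ') (hκ' : κ' < κ) :
    ∃ C > 0, ∀ t > 0, μ.real {ω | X ω ≤ t} ≤ C * t ^ κ' := by
  obtain ⟨t₀, ht₀, hsub⟩ := mem_nhdsGT_iff_exists_Ioo_subset.1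
    (eventually_le_rpow_of_tendsto_log_div_log hX (fun _ => measureReal_nonneg) hκ')
  have ht₀ : 0 < t₀ := ht₀
  refine ⟨max (2 ^ κ') ((t₀ / 2) ^ (-κ')), by positivity, fun t ht => ?_⟩
  rcases lt_or_ge t (t₀ / 2) with ht' | ht'
  · calc μ.real {ω | X ω ≤ t} ≤ μ.real {ω | X ω < 2 * t} :=
          measureReal_mono fun ω (h : X ω ≤ t) => show X ω < 2 * t by linarith
      _ ≤ (2 * t) ^ κ' := hsub ⟨by positivity, by linarith⟩
      _ = 2 ^ κ' * t ^ κ' := mul_rpow zero_le_two ht.le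
      _ ≤ _ := by gcongr; exact le_max_left _ _
  · calc μ.real {ω | X ω ≤ t} ≤ 1 := measureReal_le_one
      _ = (t₀ / 2) ^ (-κ') * (t₀ / 2) ^ κ' := by
          rw [rpow_neg (by positivity), inv_mul_cancel₀ (by positivity)]
      _ ≤ _ := by gcongr; exact le_max_right _ _

end HasNearZeroExponent

section Outage

variable [IsProbabilityMeasure μ] {H G : Ω → ℝ} {κH κG d : ℝ}

lemma exists_mul_rpow_le_measureReal_outageSet (hHnonneg : ∀ ω, 0 ≤ H ω)
    (hGnonneg : ∀ ω, 0 ≤ G ω) (hindep : ProbabilityTheory.IndepFun H G μ)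
    (hH : HasNearZeroExponent μ H κH) (hG : HasNearZeroExponent μ G κG)
    (hκH : 0 < κH) (hκG : 0 < κG) (hd : 0 < d) {α : ℝ} (hα : d < α) :
    ∃ c > 0, ∀ᶠ s in atTop, c * s ^ (-α) ≤ μ.real (outageSet H G κH κG d s) := by
  obtain ⟨t₁, hGt₁, ht₁⟩ := ((eventually_rpow_le_of_tendsto_log_div_log hG
    (fun _ => measureReal_nonneg) hκG (lt_add_one κG)).and (Ioo_mem_nhdsGT one_pos)).exists
  set a := d / κH
  have ha : 0 < a := div_pos hd hκH
  have hκα : κH < α / a := by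
    rw [lt_div_iff₀ ha]
    simpa [a, mul_div_cancel₀ d hκH.ne'] using hα
  have hsa : Tendsto (fun s : ℝ => s ^ (-a)) atTop (𝓝[>] 0) :=
    tendsto_nhdsWithin_iff.2 ⟨tendsto_rpow_neg_atTop ha,
      (eventually_gt_atTop 0).mono fun s hs => rpow_pos_of_pos hs _⟩
  refine ⟨μ.real {ω | G ω < t₁}, (rpow_pos_of_pos ht₁.1 _).trans_le hGt₁, ?_⟩
  filter_upwards [hsa.eventually (eventually_rpow_le_of_tendsto_log_div_log hH
    (fun _ => measureReal_nonneg) hκH hκα), eventually_gt_atTop 1] with s hHs hs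
  have hsub : (H ⁻¹' Iio (s ^ (-a)) ∩ G ⁻¹' Iio t₁ : Set Ω) ≤ᵐ[μ] outageSet H G κH κG d s := by
    filter_upwards [hH.ae_ne_zero hκH, hG.ae_ne_zero hκG] with ω hH0 hG0 ⟨hHω, hGω⟩
    have hHa : a ≤ -log (H ω) / log s :=
      (le_neg_log_div_log_iff ((hHnonneg ω).lt_of_ne' hH0) hs).2 (le_of_lt hHω)
    have hGω' : 0 ≤ -log (G ω) / log s := by
      refine (le_neg_log_div_log_iff ((hGnonneg ω).lt_of_ne' hG0) hs).2 ?_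
      rw [neg_zero, rpow_zero]
      exact (le_of_lt hGω).trans ht₁.2.le
    refine ⟨ha.le.trans hHa, hGω', ?_⟩
    have hdH : d ≤ κH * (-log (H ω) / log s) := by
      calc d = κH * a := (mul_div_cancel₀ d hκH.ne').symm
        _ ≤ _ := by gcongr
    linarith [mul_nonneg hκG.le hGω']
  calc μ.real {ω | G ω < t₁} * s ^ (-α)
      = (s ^ (-a)) ^ (α / a) * μ.real (G ⁻¹' Iio t₁) := by
        rw [← rpow_mul (by positivity), neg_mul, mul_div_cancel₀ _ ha.ne', mul_comm]; rfl
    _ ≤ μ.real (H ⁻¹' Iio (s ^ (-a))) * μ.real (G ⁻¹' Iio t₁) := by gcongr; exact hHs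
    _ = μ.real (H ⁻¹' Iio (s ^ (-a)) ∩ G ⁻¹' Iio t₁) := by
        simp only [measureReal_def, ENNReal.toReal_mul,
          hindep.measure_inter_preimage_eq_mul _ _ measurableSet_Iio measurableSet_Iio]
    _ ≤ μ.real (outageSet H G κH κG d s) :=
        ENNReal.toReal_mono (measure_ne_top _ _) (measure_mono_ae hsub)

lemma exists_measureReal_outageSet_le_rpow_of_mul_le (hHnonneg : ∀ ω, 0 ≤ H ω)
    (hGnonneg : ∀ ω, 0 ≤ G ω) (hindep : ProbabilityTheory.IndepFun H G μ)
    (hH : HasNearZeroExponent μ H κH) (hG : HasNearZeroExponent μ G κG)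
    (hκH : 0 < κH) (hκG : 0 < κG) {n : ℕ} {δ ρ : ℝ} (hδ : 0 < δ) (hnδ : (n + 1) * δ ≤ d)
    (hρ0 : 0 ≤ ρ) (hρ1 : ρ < 1) :
    ∃ C > 0, ∀ s > 1, μ.real (outageSet H G κH κG d s) ≤ C * s ^ (-(ρ * (n * δ))) := by
  obtain ⟨CH, hCH, hHle⟩ := hH.exists_measureReal_le_le_mul_rpow (κ' := ρ * κH)
    (by positivity) (by nlinarith)
  obtain ⟨CG, hCG, hGle⟩ := hG.exists_measureReal_le_le_mul_rpow (κ' := ρ * κG)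
    (by positivity) (by nlinarith)
  refine ⟨(n + 1) * (CH * CG), by positivity, fun s hs => ?_⟩
  have hs0 : 0 < s := by linarith
  have hpow {X : Ω → ℝ} {κ C : ℝ} (hκ : 0 < κ)
      (hX : ∀ t > 0, μ.real {ω | X ω ≤ t} ≤ C * t ^ (ρ * κ)) (i : ℕ) :
      μ.real (X ⁻¹' Iic (s ^ (-(i * δ / κ)))) ≤ C * s ^ (-(ρ * (i * δ))) := by
    have h := hX _ (rpow_pos_of_pos hs0 (-(i * δ / κ)))
    rwa [← rpow_mul hs0.le, show -(i * δ / κ) * (ρ * κ) = -(ρ * (i * δ)) by field_simp] at h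
  have hpiece : ∀ p ∈ antidiagonal n,
      μ.real (H ⁻¹' Iic (s ^ (-(p.1 * δ / κH))) ∩ G ⁻¹' Iic (s ^ (-(p.2 * δ / κG))))
        ≤ CH * CG * s ^ (-(ρ * (n * δ))) := by
    rintro ⟨i, j⟩ hij
    rw [Finset.HasAntidiagonal.mem_antidiagonal] at hij
    rw [measureReal_def, hindep.measure_inter_preimage_eq_mul _ _ measurableSet_Iic
      measurableSet_Iic, ENNReal.toReal_mul]
    calc _ ≤ (CH * s ^ (-(ρ * (i * δ)))) * (CG * s ^ (-(ρ * (j * δ)))) :=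
          mul_le_mul (hpow hκH hHle i) (hpow hκG hGle j) measureReal_nonneg (by positivity)
      _ = CH * CG * s ^ (-(ρ * (n * δ))) := by
          rw [← hij, Nat.cast_add, mul_mul_mul_comm, ← rpow_add hs0]
          ring_nf
  calc μ.real (outageSet H G κH κG d s)
      ≤ ∑ p ∈ antidiagonal n,
          μ.real (H ⁻¹' Iic (s ^ (-(p.1 * δ / κH))) ∩ G ⁻¹' Iic (s ^ (-(p.2 * δ / κG)))) :=
        (measureReal_mono (outageSet_subset_biUnion_antidiagonal hHnonneg hGnonneg hκH hκG
          hδ hnδ hs) (measure_ne_top _ _)).trans (measureReal_biUnion_finset_le _ _)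
    _ ≤ ∑ _p ∈ antidiagonal n, CH * CG * s ^ (-(ρ * (n * δ))) := Finset.sum_le_sum hpiece
    _ = (n + 1) * (CH * CG) * s ^ (-(ρ * (n * δ))) := by
        rw [Finset.sum_const, Finset.Nat.card_antidiagonal, nsmul_eq_mul]
        push_cast
        ring

lemma exists_measureReal_outageSet_le_rpow (hHnonneg : ∀ ω, 0 ≤ H ω)
    (hGnonneg : ∀ ω, 0 ≤ G ω) (hindep : ProbabilityTheory.IndepFun H G μ)
    (hH : HasNearZeroExponent μ H κH) (hG : HasNearZeroExponent μ G κG)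
    (hκH : 0 < κH) (hκG : 0 < κG) (hd : 0 < d) {β : ℝ} (hβ : β < d) :
    ∃ C > 0, ∀ᶠ s in atTop, μ.real (outageSet H G κH κG d s) ≤ C * s ^ (-β) := by
  have hlim : Tendsto (fun n : ℕ => ((n : ℝ) / (n + 1)) ^ 2 * d) atTop (𝓝 d) := by
    simpa using ((tendsto_natCast_div_add_atTop (1 : ℝ)).pow 2).mul_const d
  obtain ⟨n, hn⟩ := (hlim.eventually (lt_mem_nhds hβ)).exists
  -- grid step `δ = d / (n + 1)` and `ρ = n / (n + 1)`, so that `ρ n δ = (n / (n + 1))² d → d`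
  obtain ⟨C, hC, hbound⟩ := exists_measureReal_outageSet_le_rpow_of_mul_le hHnonneg hGnonneg
    hindep hH hG hκH hκG (n := n) (δ := d / (n + 1)) (ρ := n / (n + 1)) (by positivity)
    (mul_div_cancel₀ _ (by positivity)).le
    (by positivity) (by rw [div_lt_one (by positivity)]; linarith)
  refine ⟨C, hC, (eventually_gt_atTop 1).mono fun s hs => (hbound s hs).trans ?_⟩
  gcongr
  · exact hs.le
  · calc β ≤ ((n : ℝ) / (n + 1)) ^ 2 * d := hn.le
      _ = n / (n + 1) * (n * (d / (n + 1))) := by ring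

end Outage

end

theorem stmt_1_general
    {Ω : Type*} [MeasurableSpace Ω] (μ : Measure Ω) [IsProbabilityMeasure μ]
    (H G : Ω → ℝ)
    (hHnonneg : ∀ ω, 0 ≤ H ω) (hGnonneg : ∀ ω, 0 ≤ G ω)
    (hindep : ProbabilityTheory.IndepFun H G μ)
    (κH κG : ℝ) (hκH : 0 < κH) (hκG : 0 < κG)
    (hH : Tendsto (fun t : ℝ => Real.log (μ {ω | H ω < t}).toReal / Real.log t)
      (nhdsWithin 0 (Ioi 0)) (nhds κH))
    (hG : Tendsto (fun t : ℝ => Real.log (μ {ω | G ω < t}).toReal / Real.log t)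
      (nhdsWithin 0 (Ioi 0)) (nhds κG))
    (d : ℝ) (hd : 0 < d) :
    Tendsto (fun s : ℝ =>
      Real.log (μ {ω |
        0 ≤ -Real.log (H ω) / Real.log s ∧
        0 ≤ -Real.log (G ω) / Real.log s ∧
        d ≤ κH * (-Real.log (H ω) / Real.log s) + κG * (-Real.log (G ω) / Real.log s)}).toReal
      / Real.log s) atTop (nhds (-d)) :=
  tendsto_log_div_log_of_rpow_bounds
    (fun _ hα => exists_mul_rpow_le_measureReal_outageSet hHnonneg hGnonneg hindep hH hG
      hκH hκG hd hα)
    (fun _ hβ => exists_measureReal_outageSet_le_rpow hHnonneg hGnonneg hindep hH hG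
      hκH hκG hd hβ)

/-- If `H` and `G` are independent nonnegative random variables with
near-zero exponents `κH, κG > 0` and exponential tails, then for every `d > 0` the
probability of the outage event `{Ĥ_s ≥ 0, Ĝ_s ≥ 0, κH⬝Ĥ_s + κG⬝Ĝ_s ≥ d}`
(where `Ĥ_s = -log H / log s`) decays exactly like `s^{-d}` on the logarithmic
scale: `lim_{s→∞} log P(outage) / log s = -d`. -/
theorem stmt_1
    {Ω : Type*} [MeasurableSpace Ω] (μ : Measure Ω) [IsProbabilityMeasure μ]
    (H G : Ω → ℝ)
    (hHmeas : Measurable H) (hGmeas : Measurable G)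
    (hHnonneg : ∀ ω, 0 ≤ H ω) (hGnonneg : ∀ ω, 0 ≤ G ω)
    (hindep : ProbabilityTheory.IndepFun H G μ)
    (κH κG : ℝ) (hκH : 0 < κH) (hκG : 0 < κG)
    (hH : Tendsto (fun t : ℝ => Real.log (μ {ω | H ω < t}).toReal / Real.log t)
      (nhdsWithin 0 (Ioi 0)) (nhds κH))
    (hG : Tendsto (fun t : ℝ => Real.log (μ {ω | G ω < t}).toReal / Real.log t)
      (nhdsWithin 0 (Ioi 0)) (nhds κG))
    (hHtail : ∃ γ : ℝ, 0 < γ ∧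
      limsup (fun x : ℝ => (μ {ω | x ≤ H ω}).toReal * Real.exp (γ * x)) atTop ≤ 1)
    (hGtail : ∃ γ : ℝ, 0 < γ ∧
      limsup (fun x : ℝ => (μ {ω | x ≤ G ω}).toReal * Real.exp (γ * x)) atTop ≤ 1)
    (d : ℝ) (hd : 0 < d) :
    Tendsto (fun s : ℝ =>
      Real.log (μ {ω |
        0 ≤ -Real.log (H ω) / Real.log s ∧
        0 ≤ -Real.log (G ω) / Real.log s ∧
        d ≤ κH * (-Real.log (H ω) / Real.log s) + κG * (-Real.log (G ω) / Real.log s)}).toReal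
      / Real.log s) atTop (nhds (-d)) :=
  stmt_1_general μ H G hHnonneg hGnonneg hindep κH κG hκH hκG hH hG d hd
end

section
/- Let 2/3 ≤ α ≤ 1 and 0 ≤ d ≤ 1 − α. Then the optimized symmetric Han–Kobayashi multiplexing gain satisfies r_HK(α,d) = 1 − α/2 − d, and this value is attained at the power split v = α, i.e. r(α) = 1 − α/2 − d. -/
/-!
At the power split `v = α` every interference term `(α - v - y)⁺` vanishes, and each `aᵢ(α)`
is attained at a corner of `S_d`: `a₁ = 1 - α - d`, `a₂ = a₄ = 1 - d`, `a₃ = α - d`. For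
`α ≥ 2/3` the binding constraint is then `(a₁ + a₄)/2 = 1 - α/2 - d`. Conversely, for every
`v ≥ 0` the corner `(d, 0)` already gives `a₁(v) ≤ 1 - α - d` (because `v + (α - v)⁺ ≥ α`) and
`a₄(v) ≤ 1 - d`, so no split beats `1 - α/2 - d`.
-/

/-- The no-outage triangle `S_d = {(x,y) : x ≥ 0, y ≥ 0, x + y ≤ d}`. -/
def Sd (d : ℝ) : Set (ℝ × ℝ) := {p : ℝ × ℝ | 0 ≤ p.1 ∧ 0 ≤ p.2 ∧ p.1 + p.2 ≤ d}

/-- Compound constraint `a₁(v) = inf_{(x,y)∈S_d} (1 - x - v - (α - v - y)⁺)⁺`. -/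
noncomputable def a1 (α d v : ℝ) : ℝ :=
  sInf {z : ℝ | ∃ p ∈ Sd d, z = max (1 - p.1 - v - max (α - v - p.2) 0) 0}

/-- Compound constraint `a₂(v) = inf_{(x,y)∈S_d} (1 - x - (α - v - y)⁺)⁺`. -/
noncomputable def a2 (α d v : ℝ) : ℝ :=
  sInf {z : ℝ | ∃ p ∈ Sd d, z = max (1 - p.1 - max (α - v - p.2) 0) 0}

/-- Compound constraint `a₃(v) = inf_{(x,y)∈S_d} (max(1 - x - v, α - y) - (α - v - y)⁺)⁺`. -/
noncomputable def a3 (α d v : ℝ) : ℝ :=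
  sInf {z : ℝ | ∃ p ∈ Sd d, z = max (max (1 - p.1 - v) (α - p.2) - max (α - v - p.2) 0) 0}

/-- Compound constraint `a₄(v) = inf_{(x,y)∈S_d} (max(1 - x, α - y) - (α - v - y)⁺)⁺`. -/
noncomputable def a4 (α d v : ℝ) : ℝ :=
  sInf {z : ℝ | ∃ p ∈ Sd d, z = max (max (1 - p.1) (α - p.2) - max (α - v - p.2) 0) 0}

/-- Symmetric Han–Kobayashi multiplexing gain with power split `v`:
`r(v) = min{a₂, (a₁+a₄)/2, a₃, (a₁+a₃+a₄)/3}`. -/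
noncomputable def rHKsplit (α d v : ℝ) : ℝ :=
  min (a2 α d v)
    (min ((a1 α d v + a4 α d v) / 2)
      (min (a3 α d v) ((a1 α d v + a3 α d v + a4 α d v) / 3)))

/-- Optimized symmetric Han–Kobayashi multiplexing gain `r_HK(α,d) = sup_{v ≥ 0} r(v)`. -/
noncomputable def rHK (α d : ℝ) : ℝ := sSup {z : ℝ | ∃ v : ℝ, 0 ≤ v ∧ z = rHKsplit α d v}

section PosPartInf

variable {β : Type*} {s : Set β} {f : β → ℝ} {p : β} {c : ℝ}

lemma bddBelow_posPart_image : BddBelow {z : ℝ | ∃ q ∈ s, z = max (f q) 0} :=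
  ⟨0, by rintro z ⟨q, -, rfl⟩; exact le_max_right _ _⟩

lemma sInf_posPart_le (hp : p ∈ s) (hfp : f p ≤ c) (hc : 0 ≤ c) :
    sInf {z : ℝ | ∃ q ∈ s, z = max (f q) 0} ≤ c :=
  (csInf_le bddBelow_posPart_image ⟨p, hp, rfl⟩).trans (max_le hfp hc)

lemma sInf_posPart_eq (hp : p ∈ s) (hfp : f p = c) (hc : 0 ≤ c) (hmin : ∀ q ∈ s, c ≤ f q) :
    sInf {z : ℝ | ∃ q ∈ s, z = max (f q) 0} = c := by
  refine le_antisymm (sInf_posPart_le hp hfp.le hc) (le_csInf ⟨_, p, hp, rfl⟩ ?_)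
  rintro z ⟨q, hq, rfl⟩
  exact (hmin q hq).trans (le_max_left _ _)

end PosPartInf

section Sd

variable {α d v : ℝ}

lemma mem_Sd_left (hd : 0 ≤ d) : ((d, 0) : ℝ × ℝ) ∈ Sd d := ⟨hd, le_rfl, by simp⟩

lemma mem_Sd_right (hd : 0 ≤ d) : ((0, d) : ℝ × ℝ) ∈ Sd d := ⟨le_rfl, hd, by simp⟩

lemma a1_le (hd : 0 ≤ d) (h : d ≤ 1 - α) : a1 α d v ≤ 1 - α - d :=
  sInf_posPart_le (mem_Sd_left hd) (by simp only; linarith [le_max_left (α - v - 0) 0])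
    (by linarith)

lemma a4_le (hd : 0 ≤ d) (hα : 0 ≤ α) (h : d ≤ 1 - α) : a4 α d v ≤ 1 - d :=
  sInf_posPart_le (mem_Sd_left hd)
    (by simp only; linarith [max_eq_left (show α - 0 ≤ 1 - d by linarith),
      le_max_right (α - v - 0) 0])
    (by linarith)

lemma rHKsplit_le (hd : 0 ≤ d) (hα : 0 ≤ α) (h : d ≤ 1 - α) :
    rHKsplit α d v ≤ 1 - α/2 - d := by
  have hsplit : rHKsplit α d v ≤ (a1 α d v + a4 α d v) / 2 :=
    (min_le_right _ _).trans (min_le_left _ _)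
  linarith [a1_le (v := v) hd h, a4_le (v := v) hd hα h]

lemma max_sub_self_sub_zero {α y : ℝ} (hy : 0 ≤ y) : max (α - α - y) 0 = 0 :=
  max_eq_right (by linarith)

lemma a1_self (hd : 0 ≤ d) (h : d ≤ 1 - α) : a1 α d α = 1 - α - d := by
  refine sInf_posPart_eq (mem_Sd_left hd) ?_ (by linarith) ?_
  · simp only [max_sub_self_sub_zero le_rfl]; ring
  · rintro ⟨x, y⟩ ⟨-, hy, hxy⟩
    simp only [max_sub_self_sub_zero hy]
    linarith

lemma a2_self (hd : 0 ≤ d) (h : d ≤ 1) : a2 α d α = 1 - d := by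
  refine sInf_posPart_eq (mem_Sd_left hd) ?_ (by linarith) ?_
  · simp only [max_sub_self_sub_zero le_rfl]; ring
  · rintro ⟨x, y⟩ ⟨-, hy, hxy⟩
    simp only [max_sub_self_sub_zero hy]
    linarith

lemma a3_self (hd : 0 ≤ d) (hα : α ≤ 1) (h : 1 - α ≤ α - d) : a3 α d α = α - d := by
  refine sInf_posPart_eq (mem_Sd_right hd) ?_ (by linarith) ?_
  · simp only [max_sub_self_sub_zero hd]
    rw [max_eq_right (by linarith)]; ring
  · rintro ⟨x, y⟩ ⟨hx, hy, hxy⟩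
    dsimp only at hx hy hxy
    simp only [max_sub_self_sub_zero hy, sub_zero]
    linarith [le_max_right (1 - x - α) (α - y)]

lemma a4_self (hd : 0 ≤ d) (hα : 0 ≤ α) (h : d ≤ 1 - α) : a4 α d α = 1 - d := by
  refine sInf_posPart_eq (mem_Sd_left hd) ?_ (by linarith) ?_
  · simp only [max_sub_self_sub_zero le_rfl]
    rw [max_eq_left (by linarith)]; ring
  · rintro ⟨x, y⟩ ⟨hx, hy, hxy⟩
    simp only [max_sub_self_sub_zero hy]
    linarith [le_max_left (1 - x) (α - y)]

lemma rHKsplit_self (hα₁ : 2/3 ≤ α) (hα₂ : α ≤ 1) (hd₁ : 0 ≤ d) (hd₂ : d ≤ 1 - α) :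
    rHKsplit α d α = 1 - α/2 - d := by
  have hα : 0 ≤ α := by linarith
  rw [rHKsplit, a1_self hd₁ hd₂, a2_self hd₁ (by linarith), a3_self hd₁ hα₂ (by linarith),
    a4_self hd₁ hα hd₂]
  rw [min_eq_right (a := α - d) (by linarith),
    min_eq_left (b := (1 - α - d + (α - d) + (1 - d)) / 3) (by linarith),
    min_eq_right (a := 1 - d) (by linarith)]
  ring

end Sd

/-- For `2/3 ≤ α ≤ 1` and `0 ≤ d ≤ 1 - α`,
`r_HK(α,d) = 1 - α/2 - d`, attained at the power split `v = α`. -/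
theorem stmt_5 (α d : ℝ) (hα₁ : 2/3 ≤ α) (hα₂ : α ≤ 1) (hd₁ : 0 ≤ d) (hd₂ : d ≤ 1 - α) :
    rHK α d = 1 - α/2 - d ∧ rHKsplit α d α = 1 - α/2 - d := by
  have hsplit := rHKsplit_self hα₁ hα₂ hd₁ hd₂
  have hgreatest : IsGreatest {z : ℝ | ∃ v : ℝ, 0 ≤ v ∧ z = rHKsplit α d v} (1 - α/2 - d) := by
    refine ⟨⟨α, by linarith, hsplit.symm⟩, ?_⟩
    rintro z ⟨v, -, rfl⟩
    exact rHKsplit_le hd₁ (by linarith) hd₂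
  exact ⟨hgreatest.csSup_eq, hsplit⟩
end

section
/- Let 0 ≤ α ≤ 5/8 and 0 ≤ d ≤ max(α − 1/2, 1 − 2α). Then the optimized symmetric Han–Kobayashi multiplexing gain satisfies r_HK(α,d) = max(α − d, 1 − α − d), and this value is attained at the power split v = α, i.e. r(α) = max(α − d, 1 − α − d). -/
/-! At the power split `v = α` the private part `(α - v - y)⁺` vanishes on all of `S_d`, so the four
constraints are bounded below by `1 - α - d`, `1 - d`, `max (α - d) (1 - α - d)` and `1 - d`; for
`α ≤ 2/3` the minimum defining `r(α)` is then attained by `a₃`. Conversely, for every `v` the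
constraint `a₃(v)` is at most its value at the corner `(d, 0)` of `S_d` when `d ≤ 1 - 2α`, and at
the corner `(0, d)` when `d ≤ α - 1/2`; either value is at most `max (α - d) (1 - α - d)`. -/

section InfOverSet

variable {ι : Type*} {s : Set ι} {f : ι → ℝ}

theorem le_sInf_exists_eq (hs : s.Nonempty) {c : ℝ} (h : ∀ p ∈ s, c ≤ f p) :
    c ≤ sInf {z | ∃ p ∈ s, z = f p} := by
  obtain ⟨p₀, hp₀⟩ := hs
  refine le_csInf ⟨f p₀, p₀, hp₀, rfl⟩ ?_
  rintro _ ⟨p, hp, rfl⟩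
  exact h p hp

theorem sInf_exists_eq_le (hf : ∀ p ∈ s, 0 ≤ f p) {p : ι} (hp : p ∈ s) :
    sInf {z | ∃ p ∈ s, z = f p} ≤ f p := by
  refine csInf_le ⟨0, ?_⟩ ⟨p, hp, rfl⟩
  rintro _ ⟨q, hq, rfl⟩
  exact hf q hq

end InfOverSet

theorem max_sub_sub_max_sub_zero_le (a b v : ℝ) :
    max (a - v) b - max (b - v) 0 ≤ max (a - b) b := by
  rcases le_total v b with h | h
  · rw [max_eq_left (sub_nonneg.2 h), sub_le_iff_le_add]
    exact max_le (by linarith [le_max_left (a - b) b]) (by linarith [le_max_right (a - b) b])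
  · rw [max_eq_right (sub_nonpos.2 h), sub_zero]
    exact max_le (by linarith [le_max_left (a - b) b]) (le_max_right _ _)

theorem Sd_nonempty {d : ℝ} (hd : 0 ≤ d) : (Sd d).Nonempty :=
  ⟨(0, 0), le_rfl, le_rfl, by simpa using hd⟩

section ConstraintBounds

variable {α d v : ℝ}

theorem max_sub_sub_zero_eq_zero_of_mem_Sd (hv : α ≤ v) {p : ℝ × ℝ} (hp : p ∈ Sd d) :
    max (α - v - p.2) 0 = 0 :=
  max_eq_right (by linarith [hp.2.1])

theorem one_sub_sub_le_a1 (hd : 0 ≤ d) (hv : α ≤ v) : 1 - v - d ≤ a1 α d v :=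
  le_sInf_exists_eq (Sd_nonempty hd) fun p hp => by
    rw [max_sub_sub_zero_eq_zero_of_mem_Sd hv hp, sub_zero]
    exact le_max_of_le_left (by linarith [hp.2.2, hp.2.1])

theorem one_sub_le_a2 (hd : 0 ≤ d) (hv : α ≤ v) : 1 - d ≤ a2 α d v :=
  le_sInf_exists_eq (Sd_nonempty hd) fun p hp => by
    rw [max_sub_sub_zero_eq_zero_of_mem_Sd hv hp, sub_zero]
    exact le_max_of_le_left (by linarith [hp.2.2, hp.2.1])

theorem max_le_a3 (hd : 0 ≤ d) (hv : α ≤ v) : max (α - d) (1 - v - d) ≤ a3 α d v :=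
  le_sInf_exists_eq (Sd_nonempty hd) fun p hp => by
    rw [max_sub_sub_zero_eq_zero_of_mem_Sd hv hp, sub_zero]
    refine le_max_of_le_left (max_le_max ?_ ?_ |>.trans_eq (max_comm _ _)) <;>
      linarith [hp.1, hp.2.1, hp.2.2]

theorem one_sub_le_a4 (hd : 0 ≤ d) (hv : α ≤ v) : 1 - d ≤ a4 α d v :=
  le_sInf_exists_eq (Sd_nonempty hd) fun p hp => by
    rw [max_sub_sub_zero_eq_zero_of_mem_Sd hv hp, sub_zero]
    exact le_max_of_le_left (le_max_of_le_left (by linarith [hp.2.2, hp.2.1]))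

theorem a3_le_of_mem_Sd {p : ℝ × ℝ} (hp : p ∈ Sd d) :
    a3 α d v ≤ max (max (1 - p.1 - (α - p.2)) (α - p.2)) 0 := by
  refine (sInf_exists_eq_le (fun _ _ => le_max_right _ _) hp).trans (max_le_max_right 0 ?_)
  rw [← sub_right_comm α p.2 v]
  exact max_sub_sub_max_sub_zero_le (1 - p.1) (α - p.2) v

theorem a3_le_max (hα : 0 ≤ α) (hd₁ : 0 ≤ d) (hd₂ : d ≤ max (α - 1/2) (1 - 2*α)) :
    a3 α d v ≤ max (α - d) (1 - α - d) := by
  rcases le_max_iff.1 hd₂ with h | h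
  · refine (a3_le_of_mem_Sd (p := (0, d)) ⟨le_rfl, hd₁, by simp⟩).trans <|
      max_le (max_le ?_ ?_) ?_
    all_goals linarith [le_max_left (α - d) (1 - α - d)]
  · refine (a3_le_of_mem_Sd (p := (d, 0)) ⟨hd₁, le_rfl, by simp⟩).trans <|
      max_le (max_le ?_ ?_) ?_
    all_goals linarith [le_max_right (α - d) (1 - α - d)]

end ConstraintBounds

theorem rHKsplit_le_a3 (α d v : ℝ) : rHKsplit α d v ≤ a3 α d v :=
  (min_le_right _ _).trans ((min_le_right _ _).trans (min_le_left _ _))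

/-- For `0 ≤ α ≤ 5/8` and `0 ≤ d ≤ max(α - 1/2, 1 - 2α)`,
`r_HK(α,d) = max(α - d, 1 - α - d)`, attained at the power split `v = α`. -/
theorem stmt_10 (α d : ℝ) (hα₁ : 0 ≤ α) (hα₂ : α ≤ 5/8)
    (hd₁ : 0 ≤ d) (hd₂ : d ≤ max (α - 1/2) (1 - 2*α)) :
    rHK α d = max (α - d) (1 - α - d) ∧ rHKsplit α d α = max (α - d) (1 - α - d) := by
  set M := max (α - d) (1 - α - d)
  have hM : M ≤ 1 - α / 2 - d := max_le (by linarith) (by linarith)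
  have h₁ : 1 - α - d ≤ a1 α d α := one_sub_sub_le_a1 hd₁ le_rfl
  have h₂ : 1 - d ≤ a2 α d α := one_sub_le_a2 hd₁ le_rfl
  have h₃ : M ≤ a3 α d α := max_le_a3 hd₁ le_rfl
  have h₄ : 1 - d ≤ a4 α d α := one_sub_le_a4 hd₁ le_rfl
  have h_at_α : rHKsplit α d α = M :=
    le_antisymm ((rHKsplit_le_a3 α d α).trans (a3_le_max hα₁ hd₁ hd₂)) <|
      le_min (by linarith) (le_min (by linarith) (le_min h₃ (by linarith)))
  have h_greatest : IsGreatest {z | ∃ v, 0 ≤ v ∧ z = rHKsplit α d v} M := by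
    refine ⟨⟨α, hα₁, h_at_α.symm⟩, ?_⟩
    rintro _ ⟨v, -, rfl⟩
    exact (rHKsplit_le_a3 α d v).trans (a3_le_max hα₁ hd₁ hd₂)
  exact ⟨h_greatest.csSup_eq, h_at_α⟩
end

section
/- Let β, α be real numbers and d ≥ 0. Then inf{ (max(β − x, α − y))^+ : x ≥ 0, y ≥ 0, x + y ≤ d } = ( max( β − d , α − d , (β − d + α)/2 ) )^+, where z^+ = max(z,0). (This evaluates the compound-channel constraint min over the no-outage set {ĥ + ĝ ≤ d} of (β − ĥ ∨ α − ĝ)^+, used for the Z-interference channel sum-rate bound.) -/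
/-! The value `M` of the right-hand side bounds the objective from below at every feasible point,
since `β - x ≥ β - d`, `α - y ≥ α - d` and the larger of `β - x`, `α - y` is at least their mean
`(β + α - x - y) / 2 ≥ (β - d + α) / 2`. It is attained at `x = (β - M)⁺`, `y = (α - M)⁺`:
these lower `β` and `α` to at most `M`, and the three terms of `M` are exactly what makes
`x + y ≤ d` in each case of which of the two parts is positive. -/

section

variable {K : Type*} [Field K] [LinearOrder K] [IsStrictOrderedRing K]

lemma max_sub_le_max_sub_of_add_le {a b d x y : K} (hx : 0 ≤ x) (hy : 0 ≤ y)
    (hxy : x + y ≤ d) : max (a - d) (max (b - d) ((a - d + b) / 2)) ≤ max (a - x) (b - y) := by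
  have hmean : (a - d + b) / 2 ≤ max (a - x) (b - y) := by
    rcases le_total (a - x) (b - y) with h | h
    · exact le_max_of_le_right (by linarith)
    · exact le_max_of_le_left (by linarith)
  exact max_le (le_max_of_le_left (by linarith))
    (max_le (le_max_of_le_right (by linarith)) hmean)

lemma max_sub_zero_add_max_sub_zero_le {a b d m : K} (hd : 0 ≤ d)
    (hm : max (a - d) (max (b - d) ((a - d + b) / 2)) ≤ m) :
    max (a - m) 0 + max (b - m) 0 ≤ d := by
  obtain ⟨ham, hbm, habm⟩ : a - d ≤ m ∧ b - d ≤ m ∧ (a - d + b) / 2 ≤ m := by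
    simpa only [max_le_iff] using hm
  rcases max_cases (a - m) 0 with ⟨ha, -⟩ | ⟨ha, -⟩ <;>
    rcases max_cases (b - m) 0 with ⟨hb, -⟩ | ⟨hb, -⟩ <;>
    rw [ha, hb] <;> linarith

end

/-- For real `β, α` and `d ≥ 0`,
`inf{(max(β-x, α-y))⁺ : x ≥ 0, y ≥ 0, x+y ≤ d} = (max(β-d, α-d, (β-d+α)/2))⁺`. -/
theorem stmt_12 (β α d : ℝ) (hd : 0 ≤ d) :
    sInf {z : ℝ | ∃ x y : ℝ, 0 ≤ x ∧ 0 ≤ y ∧ x + y ≤ d ∧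
        z = max (max (β - x) (α - y)) 0} =
      max (max (β - d) (max (α - d) ((β - d + α)/2))) 0 := by
  set M := max (max (β - d) (max (α - d) ((β - d + α)/2))) 0
  have hlower : ∀ x y : ℝ, 0 ≤ x → 0 ≤ y → x + y ≤ d → M ≤ max (max (β - x) (α - y)) 0 :=
    fun x y hx hy hxy => max_le_max_right 0 (max_sub_le_max_sub_of_add_le hx hy hxy)
  have hfeasible : max (β - M) 0 + max (α - M) 0 ≤ d :=
    max_sub_zero_add_max_sub_zero_le hd (le_max_left _ _)
  have hattained : max (max (β - max (β - M) 0) (α - max (α - M) 0)) 0 ≤ M :=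
    max_le (max_le (sub_le_comm.mpr (le_max_left _ _)) (sub_le_comm.mpr (le_max_left _ _)))
      (le_max_right _ _)
  refine IsLeast.csInf_eq ⟨⟨max (β - M) 0, max (α - M) 0, le_max_right _ _, le_max_right _ _,
    hfeasible, le_antisymm (hlower _ _ (le_max_right _ _) (le_max_right _ _) hfeasible)
    hattained⟩, ?_⟩
  rintro z ⟨x, y, hx, hy, hxy, rfl⟩
  exact hlower x y hx hy hxy
end

section
/- Let A, B, C, D be nonnegative real numbers with A ≤ B. Then the set { (r₁, s₂ + t₂) : 0 ≤ r₁ ≤ A, s₂ ≥ 0, t₂ ≥ 0, r₁ + t₂ ≤ B, s₂ ≤ C, s₂ + t₂ ≤ D } equals the set { (r₁, r₂) ∈ ℝ² : 0 ≤ r₁ ≤ A, 0 ≤ r₂ ≤ D, r₁ + r₂ ≤ B + C }. (This is the Fourier–Motzkin elimination of the private/public rate-split variables (s₂,t₂) in the Han–Kobayashi achievable region of the Z-interference channel.) -/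
/-! The constraints on `(s₂, t₂)` only involve `r₂ = s₂ + t₂` through `s₂ + t₂ ≤ D`, a box
`0 ≤ s₂ ≤ C`, and `0 ≤ t₂ ≤ B - r₁`, which is a nonempty interval because `r₁ ≤ A ≤ B`.
Splitting `r₂` across a box `[0, C] × [0, E]` is possible exactly when `0 ≤ r₂ ≤ C + E`:
take `s₂ = min C r₂`. -/

theorem exists_add_eq_of_le_add {α : Type*} [AddCommGroup α] [LinearOrder α]
    [IsOrderedAddMonoid α] {a b c : α} (ha : 0 ≤ a) (hb : 0 ≤ b) (hc : 0 ≤ c)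
    (hcab : c ≤ a + b) : ∃ x y, 0 ≤ x ∧ x ≤ a ∧ 0 ≤ y ∧ y ≤ b ∧ x + y = c := by
  refine ⟨min a c, c - min a c, le_min ha hc, min_le_left _ _,
    sub_nonneg.2 (min_le_right _ _), ?_, add_sub_cancel _ _⟩
  rcases le_total a c with hac | hca
  · rwa [min_eq_left hac, sub_le_iff_le_add']
  · rwa [min_eq_right hca, sub_self]

theorem stmt_13_general (A B C D : ℝ) (hAB : A ≤ B) (hC : 0 ≤ C) :
    {p : ℝ × ℝ | ∃ r₁ s₂ t₂ : ℝ,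
        0 ≤ r₁ ∧ r₁ ≤ A ∧ 0 ≤ s₂ ∧ 0 ≤ t₂ ∧
        r₁ + t₂ ≤ B ∧ s₂ ≤ C ∧ s₂ + t₂ ≤ D ∧
        p = (r₁, s₂ + t₂)} =
      {p : ℝ × ℝ | 0 ≤ p.1 ∧ p.1 ≤ A ∧ 0 ≤ p.2 ∧ p.2 ≤ D ∧ p.1 + p.2 ≤ B + C} := by
  ext ⟨x, y⟩
  simp only [Set.mem_ofPred_eq, Prod.mk.injEq]
  constructor
  · rintro ⟨r₁, s₂, t₂, hr₁, hr₁A, hs₂, ht₂, hB, hs₂C, hD, rfl, rfl⟩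
    exact ⟨hr₁, hr₁A, add_nonneg hs₂ ht₂, hD, by linarith⟩
  · rintro ⟨hx, hxA, hy, hyD, hBC⟩
    obtain ⟨s₂, t₂, hs₂, hs₂C, ht₂, ht₂B, rfl⟩ :=
      exists_add_eq_of_le_add hC (sub_nonneg.2 (hxA.trans hAB)) hy (by linarith)
    exact ⟨x, s₂, t₂, hx, hxA, hs₂, ht₂, by linarith, hs₂C, hyD, rfl, rfl⟩

/-- Fourier–Motzkin elimination of the rate-split variables
`(s₂, t₂)` for the Z-interference channel: if `0 ≤ A ≤ B` and `C, D ≥ 0`, then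
`{(r₁, s₂+t₂) : 0 ≤ r₁ ≤ A, s₂,t₂ ≥ 0, r₁+t₂ ≤ B, s₂ ≤ C, s₂+t₂ ≤ D}
  = {(r₁,r₂) : 0 ≤ r₁ ≤ A, 0 ≤ r₂ ≤ D, r₁+r₂ ≤ B+C}`. -/
theorem stmt_13 (A B C D : ℝ) (hA : 0 ≤ A) (hAB : A ≤ B) (hC : 0 ≤ C) (hD : 0 ≤ D) :
    {p : ℝ × ℝ | ∃ r₁ s₂ t₂ : ℝ,
        0 ≤ r₁ ∧ r₁ ≤ A ∧ 0 ≤ s₂ ∧ 0 ≤ t₂ ∧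
        r₁ + t₂ ≤ B ∧ s₂ ≤ C ∧ s₂ + t₂ ≤ D ∧
        p = (r₁, s₂ + t₂)} =
      {p : ℝ × ℝ | 0 ≤ p.1 ∧ p.1 ≤ A ∧ 0 ≤ p.2 ∧ p.2 ≤ D ∧ p.1 + p.2 ≤ B + C} :=
  stmt_13_general A B C D hAB hC
end

section
/- Let β₁, β₂, α₁ be real numbers and d₁, d₂ ≥ 0, and put A = (β₁ − d₁)^+, B = (max(β₁ − d₁, α₁ − d₁, (β₁ − d₁ + α₁)/2))^+, C = (β₂ − α₁ − d₂)^+, D = (β₂ − d₂)^+. Then the projected Han–Kobayashi region { (r₁, s₂ + t₂) : 0 ≤ r₁ ≤ A, s₂ ≥ 0, t₂ ≥ 0, r₁ + t₂ ≤ B, s₂ ≤ C, s₂ + t₂ ≤ D } equals { (r₁, r₂) : 0 ≤ r₁ ≤ (β₁ − d₁)^+, 0 ≤ r₂ ≤ (β₂ − d₂)^+, r₁ + r₂ ≤ (max(β₁ − d₁, α₁ − d₁, (β₁ − d₁ + α₁)/2))^+ + (β₂ − α₁ − d₂)^+ }. -/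
/-! Eliminating the split `r₂ = s₂ + t₂` is a Fourier–Motzkin step: given a target pair
`(r₁, r₂)`, route as much of `r₂` as possible through the private rate (`s₂ = min r₂ C`) and
send only the overflow `t₂ = (r₂ - C)⁺` publicly. The remaining constraint `r₁ + t₂ ≤ B` then
reads `r₁ ≤ B` (implied by `r₁ ≤ A ≤ B`) or `r₁ + r₂ ≤ B + C`. -/

theorem rateSplit_projection_eq {A B C D : ℝ} (hC : 0 ≤ C) (hAB : A ≤ B) :
    {p : ℝ × ℝ | ∃ r₁ s₂ t₂ : ℝ, 0 ≤ r₁ ∧ r₁ ≤ A ∧ 0 ≤ s₂ ∧ 0 ≤ t₂ ∧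
        r₁ + t₂ ≤ B ∧ s₂ ≤ C ∧ s₂ + t₂ ≤ D ∧ p = (r₁, s₂ + t₂)} =
      {p : ℝ × ℝ | 0 ≤ p.1 ∧ p.1 ≤ A ∧ 0 ≤ p.2 ∧ p.2 ≤ D ∧ p.1 + p.2 ≤ B + C} := by
  ext ⟨r₁, r₂⟩
  simp only [Set.mem_ofPred_eq, Prod.mk.injEq]
  constructor
  · rintro ⟨r₁, s₂, t₂, h0r, hrA, h0s, h0t, hrtB, hsC, hstD, rfl, rfl⟩
    exact ⟨h0r, hrA, by linarith, hstD, by linarith⟩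
  · rintro ⟨h0r, hrA, h0r₂, hr₂D, hsum⟩
    rcases le_total r₂ C with hr₂C | hCr₂
    · exact ⟨r₁, r₂, 0, h0r, hrA, h0r₂, le_rfl, by linarith, hr₂C, by linarith, rfl, by ring⟩
    · exact ⟨r₁, C, r₂ - C, h0r, hrA, hC, by linarith, by linarith, le_rfl, by linarith, rfl,
        by ring⟩

theorem stmt_14_general (β₁ β₂ α₁ d₁ d₂ : ℝ) :
    {p : ℝ × ℝ | ∃ r₁ s₂ t₂ : ℝ,
        0 ≤ r₁ ∧ r₁ ≤ max (β₁ - d₁) 0 ∧ 0 ≤ s₂ ∧ 0 ≤ t₂ ∧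
        r₁ + t₂ ≤ max (max (β₁ - d₁) (max (α₁ - d₁) ((β₁ - d₁ + α₁)/2))) 0 ∧
        s₂ ≤ max (β₂ - α₁ - d₂) 0 ∧
        s₂ + t₂ ≤ max (β₂ - d₂) 0 ∧
        p = (r₁, s₂ + t₂)} =
      {p : ℝ × ℝ | 0 ≤ p.1 ∧ p.1 ≤ max (β₁ - d₁) 0 ∧
        0 ≤ p.2 ∧ p.2 ≤ max (β₂ - d₂) 0 ∧
        p.1 + p.2 ≤ max (max (β₁ - d₁) (max (α₁ - d₁) ((β₁ - d₁ + α₁)/2))) 0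
          + max (β₂ - α₁ - d₂) 0} :=
  rateSplit_projection_eq (le_max_right _ _) (max_le_max_right 0 (le_max_left _ _))

/-- The projected Han–Kobayashi achievable region of the slow-fading
Z-interference channel, with
`A = (β₁-d₁)⁺`, `B = (max(β₁-d₁, α₁-d₁, (β₁-d₁+α₁)/2))⁺`, `C = (β₂-α₁-d₂)⁺`,
`D = (β₂-d₂)⁺`, equals
`{(r₁,r₂) : 0 ≤ r₁ ≤ A, 0 ≤ r₂ ≤ D, r₁+r₂ ≤ B + C}`. -/
theorem stmt_14 (β₁ β₂ α₁ d₁ d₂ : ℝ) (hd₁ : 0 ≤ d₁) (hd₂ : 0 ≤ d₂) :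
    {p : ℝ × ℝ | ∃ r₁ s₂ t₂ : ℝ,
        0 ≤ r₁ ∧ r₁ ≤ max (β₁ - d₁) 0 ∧ 0 ≤ s₂ ∧ 0 ≤ t₂ ∧
        r₁ + t₂ ≤ max (max (β₁ - d₁) (max (α₁ - d₁) ((β₁ - d₁ + α₁)/2))) 0 ∧
        s₂ ≤ max (β₂ - α₁ - d₂) 0 ∧
        s₂ + t₂ ≤ max (β₂ - d₂) 0 ∧
        p = (r₁, s₂ + t₂)} =
      {p : ℝ × ℝ | 0 ≤ p.1 ∧ p.1 ≤ max (β₁ - d₁) 0 ∧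
        0 ≤ p.2 ∧ p.2 ≤ max (β₂ - d₂) 0 ∧
        p.1 + p.2 ≤ max (max (β₁ - d₁) (max (α₁ - d₁) ((β₁ - d₁ + α₁)/2))) 0
          + max (β₂ - α₁ - d₂) 0} :=
  stmt_14_general β₁ β₂ α₁ d₁ d₂
end

section
/- Let 0 ≤ d ≤ 1 and α ≥ 0. Then inf{ (max(1 − x₁, α − y₁))^+ + (1 − α − x₂ + y₁)^+ : x₁ ≥ 0, y₁ ≥ 0, x₁ + y₁ ≤ d, 0 ≤ x₂ ≤ d } = ( max( 1 − d , α − d , (1 − d + α)/2 ) )^+ + (1 − α − d)^+, where z^+ = max(z,0). (This shows the worst-case sum-rate outer bound of the fading Z-interference channel, in which the transmitters know the channel and adapt the power split v₂ = α − ĝ₁, coincides with the sum-rate of the fixed Han–Kobayashi inner bound.) -/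
/-!
Each term `max (1 - x₁) (α - y₁)` dominates `1 - d`, `α - d` and the average `(1 - d + α) / 2` of
its two entries, and the second term is smallest at `x₂ = d`, `y₁ = 0`. Both lower bounds are
attained at once: at `(x₁, y₁) = (d, 0)` when `α ≤ 1 - d`, at `(0, d)` when `1 + d ≤ α`, and in
between at the point of `x₁ + y₁ = d` balancing `1 - x₁ = α - y₁`, where the second term vanishes.
-/

section SumRate

variable {K : Type*} [Field K] [LinearOrder K] [IsStrictOrderedRing K]

def sumRateBound (α x₁ y₁ x₂ : K) : K :=
  max (max (1 - x₁) (α - y₁)) 0 + max (1 - α - x₂ + y₁) 0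

def worstCaseSumRate (d α : K) : K :=
  max (max (1 - d) (max (α - d) ((1 - d + α) / 2))) 0 + max (1 - α - d) 0

theorem max_sub_le_max_sub {d α x₁ y₁ : K} (hx₁ : 0 ≤ x₁) (hy₁ : 0 ≤ y₁) (hxy : x₁ + y₁ ≤ d) :
    max (1 - d) (max (α - d) ((1 - d + α) / 2)) ≤ max (1 - x₁) (α - y₁) := by
  have h₁ : 1 - x₁ ≤ max (1 - x₁) (α - y₁) := le_max_left _ _
  have h₂ : α - y₁ ≤ max (1 - x₁) (α - y₁) := le_max_right _ _
  exact max_le (by linarith) (max_le (by linarith) (by linarith))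

theorem worstCaseSumRate_le_sumRateBound {d α x₁ y₁ x₂ : K} (hx₁ : 0 ≤ x₁) (hy₁ : 0 ≤ y₁)
    (hxy : x₁ + y₁ ≤ d) (hx₂ : x₂ ≤ d) :
    worstCaseSumRate d α ≤ sumRateBound α x₁ y₁ x₂ :=
  add_le_add (max_le_max_right 0 (max_sub_le_max_sub hx₁ hy₁ hxy))
    (max_le_max_right 0 (by linarith))

theorem exists_sumRateBound_le_worstCaseSumRate {d : K} (α : K) (hd : 0 ≤ d) :
    ∃ x₁ y₁ x₂ : K, 0 ≤ x₁ ∧ 0 ≤ y₁ ∧ x₁ + y₁ ≤ d ∧ 0 ≤ x₂ ∧ x₂ ≤ d ∧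
      sumRateBound α x₁ y₁ x₂ ≤ worstCaseSumRate d α := by
  rcases le_total α (1 - d) with hα | hα
  · refine ⟨d, 0, d, hd, le_rfl, by linarith, hd, le_rfl, add_le_add ?_ ?_⟩
    · exact max_le_max_right 0 (max_le (le_max_left _ _) (le_max_of_le_left (by linarith)))
    · exact max_le_max_right 0 (by linarith)
  rcases le_total α (1 + d) with hα' | hα'
  · refine ⟨(1 + d - α) / 2, (α + d - 1) / 2, d, by linarith, by linarith, by linarith, hd,
      le_rfl, add_le_add ?_ (max_le (le_max_of_le_right (by linarith)) (le_max_right _ _))⟩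
    refine max_le_max_right 0 (max_le ?_ ?_) <;>
      exact le_max_of_le_right (le_max_of_le_right (by linarith))
  · refine ⟨0, d, d, le_rfl, hd, by linarith, hd, le_rfl,
      add_le_add ?_ (max_le (le_max_of_le_right (by linarith)) (le_max_right _ _))⟩
    exact max_le_max_right 0 (max_le (le_max_of_le_right (le_max_of_le_left (by linarith)))
      (le_max_of_le_right (le_max_left _ _)))

end SumRate

theorem stmt_15_general (d α : ℝ) (hd₁ : 0 ≤ d) :
    sInf {z : ℝ | ∃ x₁ y₁ x₂ : ℝ,
        0 ≤ x₁ ∧ 0 ≤ y₁ ∧ x₁ + y₁ ≤ d ∧ 0 ≤ x₂ ∧ x₂ ≤ d ∧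
        z = max (max (1 - x₁) (α - y₁)) 0 + max (1 - α - x₂ + y₁) 0} =
      max (max (1 - d) (max (α - d) ((1 - d + α)/2))) 0 + max (1 - α - d) 0 := by
  refine IsLeast.csInf_eq ⟨?_, ?_⟩
  · obtain ⟨x₁, y₁, x₂, hx₁, hy₁, hxy, hx₂, hx₂d, hle⟩ :=
      exists_sumRateBound_le_worstCaseSumRate α hd₁
    exact ⟨x₁, y₁, x₂, hx₁, hy₁, hxy, hx₂, hx₂d,
      le_antisymm (worstCaseSumRate_le_sumRateBound hx₁ hy₁ hxy hx₂d) hle⟩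
  · rintro z ⟨x₁, y₁, x₂, hx₁, hy₁, hxy, -, hx₂d, rfl⟩
    exact worstCaseSumRate_le_sumRateBound hx₁ hy₁ hxy hx₂d

/-- For `0 ≤ d ≤ 1` and `α ≥ 0`, the worst-case sum-rate outer bound
of the fading Z-interference channel:
`inf{(max(1-x₁, α-y₁))⁺ + (1-α-x₂+y₁)⁺ : x₁,y₁ ≥ 0, x₁+y₁ ≤ d, 0 ≤ x₂ ≤ d}
  = (max(1-d, α-d, (1-d+α)/2))⁺ + (1-α-d)⁺`. -/
theorem stmt_15 (d α : ℝ) (hd₁ : 0 ≤ d) (hd₂ : d ≤ 1) (hα : 0 ≤ α) :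
    sInf {z : ℝ | ∃ x₁ y₁ x₂ : ℝ,
        0 ≤ x₁ ∧ 0 ≤ y₁ ∧ x₁ + y₁ ≤ d ∧ 0 ≤ x₂ ∧ x₂ ≤ d ∧
        z = max (max (1 - x₁) (α - y₁)) 0 + max (1 - α - x₂ + y₁) 0} =
      max (max (1 - d) (max (α - d) ((1 - d + α)/2))) 0 + max (1 - α - d) 0 :=
  stmt_15_general d α hd₁
end
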